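/- Let K ∈ ℕ, let λ₀, …, λ_K be nonnegative reals with W := Σ_{m=0}^K λ_m > 0, let x₀, …, x_K and c be real numbers, let η ∈ (0, 1) and δ ∈ (0, 1/2). If Re( e^{−ic} · (1/W) Σ_{m=0}^K λ_m e^{i x_m} ) ≥ 1 − η, then the weighted count of badly aligned indices satisfies Σ_{m=0}^K λ_m · 𝟙{ d(x_m − c) ≥ η^δ } ≤ (π²/2) · W · η^{1−2δ}. -/

import Mathlib

/-!
Since `cos` is invariant under `2πℤ` and `cos y ≤ 1 - 2 y² / π²` for `|y| ≤ π`, every index with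
`d(x_m - c) ≥ η^δ` has defect `1 - cos (x_m - c) ≥ 2 η^{2δ} / π²`. The hypothesis says exactly that
the weighted total defect `∑ λ_m (1 - cos (x_m - c))` is at most `W η`, so Markov's inequality
bounds the weight of those indices by `W η · π² / (2 η^{2δ})`.
-/

/-- The distance from a real number to the set `2πℤ`. -/
noncomputable def distToTwoPiZ (y : ℝ) : ℝ := ⨅ j : ℤ, |y - 2 * Real.pi * j|

open Real Finset

lemma distToTwoPiZ_le_abs_sub (y : ℝ) (j : ℤ) : distToTwoPiZ y ≤ |y - 2 * π * j| :=
  ciInf_le ⟨0, by rintro _ ⟨k, rfl⟩; exact abs_nonneg _⟩ j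

lemma exists_int_abs_sub_two_pi_mul_le_pi (y : ℝ) : ∃ j : ℤ, |y - 2 * π * j| ≤ π := by
  refine ⟨round (y / (2 * π)), ?_⟩
  have hround := abs_sub_round (y / (2 * π))
  have hrescale : y - 2 * π * round (y / (2 * π)) = 2 * π * (y / (2 * π) - round (y / (2 * π))) := by
    field_simp
  rw [hrescale, abs_mul, abs_of_pos (by positivity)]
  nlinarith [pi_pos]

lemma mul_sq_le_one_sub_cos_of_le_distToTwoPiZ {y a : ℝ} (ha : 0 ≤ a) (hd : a ≤ distToTwoPiZ y) :
    2 / π ^ 2 * a ^ 2 ≤ 1 - cos y := by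
  obtain ⟨j, hj⟩ := exists_int_abs_sub_two_pi_mul_le_pi y
  have hcos : cos (y - 2 * π * j) = cos y := by
    rw [mul_comm, cos_sub_int_mul_two_pi]
  have hsq : a ^ 2 ≤ (y - 2 * π * j) ^ 2 := by
    rw [← sq_abs (y - _)]
    exact pow_le_pow_left₀ ha (hd.trans (distToTwoPiZ_le_abs_sub y j)) 2
  have := cos_le_one_sub_mul_cos_sq hj
  rw [hcos] at this
  nlinarith [show 0 ≤ 2 / π ^ 2 by positivity]

lemma re_exp_neg_mul_sum_mul_exp {ι : Type*} (s : Finset ι) (w x : ι → ℝ) (c : ℝ) :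
    (Complex.exp (-Complex.I * c) * ∑ m ∈ s, (w m : ℂ) * Complex.exp (Complex.I * x m)).re =
      ∑ m ∈ s, w m * cos (x m - c) := by
  rw [mul_sum, Complex.re_sum]
  refine sum_congr rfl fun m _ => ?_
  have hexp : Complex.exp (-Complex.I * c) * ((w m : ℂ) * Complex.exp (Complex.I * x m)) =
      w m * Complex.exp ((x m - c : ℝ) * Complex.I) := by
    rw [mul_left_comm, ← Complex.exp_add]
    push_cast
    ring_nf
  rw [hexp, Complex.re_ofReal_mul, Complex.exp_ofReal_mul_I_re]

lemma sum_mul_ite_le_sum_mul_div {ι : Type*} (s : Finset ι) {w f : ι → ℝ} (P : ι → Prop)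
    [DecidablePred P] {t : ℝ} (ht : 0 < t) (hw : ∀ m ∈ s, 0 ≤ w m) (hf : ∀ m ∈ s, 0 ≤ f m)
    (hP : ∀ m ∈ s, P m → t ≤ f m) :
    ∑ m ∈ s, w m * (if P m then 1 else 0) ≤ (∑ m ∈ s, w m * f m) / t := by
  rw [le_div_iff₀ ht, sum_mul]
  refine sum_le_sum fun m hm => ?_
  split_ifs with hPm
  · rw [mul_one]
    exact mul_le_mul_of_nonneg_left (hP m hm hPm) (hw m hm)
  · rw [mul_zero, zero_mul]
    exact mul_nonneg (hw m hm) (hf m hm)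

lemma rpow_one_sub_two_mul {η : ℝ} (hη : 0 < η) (δ : ℝ) : η ^ (1 - 2 * δ) = η / (η ^ δ) ^ 2 := by
  rw [rpow_sub hη, rpow_one, mul_comm, ← Nat.cast_ofNat, rpow_mul_natCast hη.le]

theorem weighted_count_badly_aligned_bound_general
    (K : ℕ) (lam : Fin (K + 1) → ℝ) (hlam : ∀ m, 0 ≤ lam m)
    (W : ℝ) (hW : W = ∑ m, lam m) (hWpos : 0 < W)
    (x : Fin (K + 1) → ℝ) (c : ℝ) (η δ : ℝ)
    (hη : η ∈ Set.Ioo (0 : ℝ) 1)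
    (h : 1 - η ≤
      (Complex.exp (-Complex.I * (c : ℂ)) *
        ((1 / W : ℝ) * ∑ m, (lam m : ℂ) * Complex.exp (Complex.I * (x m : ℂ)))).re) :
    ∑ m, lam m * (if η ^ δ ≤ distToTwoPiZ (x m - c) then (1 : ℝ) else 0) ≤
      (Real.pi ^ 2 / 2) * W * η ^ (1 - 2 * δ) := by
  have ha : 0 < η ^ δ := rpow_pos_of_pos hη.1 δ
  rw [mul_left_comm, Complex.re_ofReal_mul, re_exp_neg_mul_sum_mul_exp, one_div_mul_eq_div,
    le_div_iff₀ hWpos] at h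
  have hdefect : ∑ m, lam m * (1 - cos (x m - c)) ≤ W * η := by
    simp only [mul_sub, mul_one, sum_sub_distrib, ← hW]
    linarith
  calc _ ≤ (∑ m, lam m * (1 - cos (x m - c))) / (2 / π ^ 2 * (η ^ δ) ^ 2) :=
        sum_mul_ite_le_sum_mul_div _ _ (by positivity) (fun m _ => hlam m)
          (fun m _ => sub_nonneg.2 (cos_le_one _))
          (fun m _ hm => mul_sq_le_one_sub_cos_of_le_distToTwoPiZ ha.le hm)
    _ ≤ W * η / (2 / π ^ 2 * (η ^ δ) ^ 2) := by gcongr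
    _ = (Real.pi ^ 2 / 2) * W * η ^ (1 - 2 * δ) := by
        rw [rpow_one_sub_two_mul hη.1]
        field_simp

theorem weighted_count_badly_aligned_bound
    (K : ℕ) (lam : Fin (K + 1) → ℝ) (hlam : ∀ m, 0 ≤ lam m)
    (W : ℝ) (hW : W = ∑ m, lam m) (hWpos : 0 < W)
    (x : Fin (K + 1) → ℝ) (c : ℝ) (η δ : ℝ)
    (hη : η ∈ Set.Ioo (0 : ℝ) 1) (hδ : δ ∈ Set.Ioo (0 : ℝ) (1 / 2))
    (h : 1 - η ≤
      (Complex.exp (-Complex.I * (c : ℂ)) *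
        ((1 / W : ℝ) * ∑ m, (lam m : ℂ) * Complex.exp (Complex.I * (x m : ℂ)))).re) :
    ∑ m, lam m * (if η ^ δ ≤ distToTwoPiZ (x m - c) then (1 : ℝ) else 0) ≤
      (Real.pi ^ 2 / 2) * W * η ^ (1 - 2 * δ) :=
  weighted_count_badly_aligned_bound_general K lam hlam W hW hWpos x c η δ hη h
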